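/- Let all items have size in (1/4, 1/2]; call items of size in (1/4,1/3] small. Suppose three small items S₁, S₂, S₃ arrive consecutively (in that order) in the input to Best-Fit. Then in the final Best-Fit packing, at least one of S₁, S₂, S₃ is packed in a bin containing three items, or in a bin containing exactly two small items. -/

import Mathlib

/-- The load of a bin, where a bin is a list of indices into the item list `I`. -/
def binLoad (I : List ℝ) (b : List ℕ) : ℝ := (b.map (fun i => I.getD i 0)).sum

/-- One step of Best-Fit on the instance `I`, with bins recorded as lists of item
indices: the item with index `t` is placed in a fullest feasible bin, and a new bin
is opened iff no existing bin can accommodate it. -/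
def BFStep (I : List ℝ) (bins : List (List ℕ)) (t : ℕ) (bins' : List (List ℕ)) : Prop :=
  (∃ i : ℕ, ∃ h : i < bins.length,
      binLoad I (bins[i]'h) + I.getD t 0 ≤ 1 ∧
      (∀ j : ℕ, ∀ hj : j < bins.length,
        binLoad I (bins[j]'hj) + I.getD t 0 ≤ 1 →
          binLoad I (bins[j]'hj) ≤ binLoad I (bins[i]'h)) ∧
      bins' = bins.set i (t :: (bins[i]'h)))
  ∨ ((∀ b ∈ bins, 1 < binLoad I b + I.getD t 0) ∧ bins' = bins ++ [[t]])

/-- `BFFrom I bins ts final`: Best-Fit, starting from the packing `bins`, processes the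
items of `I` with indices `ts` (in order) and ends with the packing `final`. -/
inductive BFFrom (I : List ℝ) : List (List ℕ) → List ℕ → List (List ℕ) → Prop
  | nil (bins : List (List ℕ)) : BFFrom I bins [] bins
  | cons {bins bins' final : List (List ℕ)} {t : ℕ} {ts : List ℕ} :
      BFStep I bins t bins' → BFFrom I bins' ts final → BFFrom I bins (t :: ts) final

/-!
Items only enter a bin whose load allows them, so a 3-bin never changes again and an SS-bin can
only become a 3-bin: once one of `S₁, S₂, S₃` lies in a 3-bin or an SS-bin, it stays in one.
Since any two items fit together, Best-Fit keeps at most one 1-bin and opens a bin only when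
there is none. If `S₁` joins a 2-bin we are done. If it joins a 1-bin, no 1-bin is left, so `S₂`
either completes a 2-bin or opens `{S₂}`, the only 1-bin, which `S₃` then joins unless it
completes a 2-bin. If `S₁` opens a bin, `{S₁}` is the only 1-bin and `S₂` joins it or a 2-bin.
Only the any-fit property of Best-Fit is used, not the choice of the fullest bin.
-/

namespace BestFit

variable {I : List ℝ}

def Admissible (I : List ℝ) (i : ℕ) : Prop := 1 / 4 < I.getD i 0 ∧ I.getD i 0 ≤ 1 / 2

def IsSmall (I : List ℝ) (i : ℕ) : Prop := I.getD i 0 ≤ 1 / 3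

def ThreeOrSS (I : List ℝ) (b : List ℕ) : Prop :=
  b.length = 3 ∨ (b.length = 2 ∧ ∀ i ∈ b, IsSmall I i)

def HasSettled (I : List ℝ) (q : ℕ) (bins : List (List ℕ)) : Prop :=
  ∃ b ∈ bins, q ∈ b ∧ ThreeOrSS I b

def SingletonFree (bins : List (List ℕ)) : Prop := ∀ b ∈ bins, b.length ≠ 1

structure IsBFPacking (I : List ℝ) (bins : List (List ℕ)) : Prop where
  ne_nil : ∀ b ∈ bins, b ≠ []
  admissible : ∀ b ∈ bins, ∀ i ∈ b, Admissible I i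
  countP_singleton_le_one : bins.countP (fun b => b.length == 1) ≤ 1

lemma _root_.List.mem_set_of_mem_of_ne {α : Type*} {l : List α} {a : α} {i : ℕ}
    (hi : i < l.length) (ha : a ∈ l) (hne : a ≠ l[i]) (b : α) : a ∈ l.set i b := by
  obtain ⟨j, hj, rfl⟩ := List.mem_iff_getElem.mp ha
  have hij : i ≠ j := by rintro rfl; exact hne rfl
  exact List.mem_iff_getElem.mpr ⟨j, by simpa using hj, by simp [List.getElem_set_ne hij]⟩

lemma length_div_four_le_binLoad {b : List ℕ} (hb : ∀ i ∈ b, 1 / 4 < I.getD i 0) :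
    (b.length : ℝ) / 4 ≤ binLoad I b := by
  have := List.card_nsmul_le_sum (b.map fun i => I.getD i 0) (1 / 4)
    (by simpa using fun i hi => (hb i hi).le)
  simp only [List.length_map, nsmul_eq_mul] at this
  unfold binLoad
  linarith

lemma length_le_two_of_fits {b : List ℕ} {t : ℕ} (hb : ∀ i ∈ b, Admissible I i)
    (ht : Admissible I t) (hfit : binLoad I b + I.getD t 0 ≤ 1) : b.length ≤ 2 := by
  have := length_div_four_le_binLoad fun i hi => (hb i hi).1
  have : (b.length : ℝ) < 3 := by linarith [ht.1]
  exact_mod_cast Nat.lt_succ_iff.mp (by exact_mod_cast this)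

lemma singleton_fits {x t : ℕ} (hx : Admissible I x) (ht : Admissible I t) :
    binLoad I [x] + I.getD t 0 ≤ 1 := by
  simp only [binLoad, List.map_cons, List.map_nil, List.sum_cons, List.sum_nil]
  linarith [hx.2, ht.2]

lemma singletonFree_of_forall_not_fit {bins : List (List ℕ)} {t : ℕ}
    (hadm : ∀ b ∈ bins, ∀ i ∈ b, Admissible I i) (ht : Admissible I t)
    (hnew : ∀ b ∈ bins, 1 < binLoad I b + I.getD t 0) : SingletonFree bins := by
  intro b hb hlen
  obtain ⟨x, rfl⟩ := List.length_eq_one_iff.mp hlen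
  exact (hnew _ hb).not_ge (singleton_fits (hadm _ hb x (by simp)) ht)

lemma ThreeOrSS.cons {b : List ℕ} {t : ℕ} (h : ThreeOrSS I b) (hb : ∀ i ∈ b, Admissible I i)
    (ht : Admissible I t) (hfit : binLoad I b + I.getD t 0 ≤ 1) : ThreeOrSS I (t :: b) := by
  have := length_le_two_of_fits hb ht hfit
  rcases h with h3 | ⟨h2, -⟩
  · omega
  · exact Or.inl (by simp [h2])

namespace IsBFPacking

lemma nil : IsBFPacking I [] := ⟨by simp, by simp, by simp⟩

lemma step {bins bins' : List (List ℕ)} {t : ℕ} (hP : IsBFPacking I bins)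
    (ht : Admissible I t) (h : BFStep I bins t bins') : IsBFPacking I bins' := by
  rcases h with ⟨i, hi, -, -, rfl⟩ | ⟨hnew, rfl⟩
  · refine ⟨fun b hb => ?_, fun b hb => ?_, ?_⟩
    · rcases List.mem_or_eq_of_mem_set hb with hb | rfl
      exacts [hP.ne_nil b hb, List.cons_ne_nil _ _]
    · rcases List.mem_or_eq_of_mem_set hb with hb | rfl
      exacts [hP.admissible b hb,
        List.forall_mem_cons.mpr ⟨ht, hP.admissible _ (List.getElem_mem hi)⟩]
    · have hlen : (t :: bins[i]).length ≠ 1 := by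
        simpa [List.length_pos_iff] using hP.ne_nil _ (List.getElem_mem hi)
      have := hP.countP_singleton_le_one
      rw [List.countP_set hi]
      simp only [hlen, beq_iff_eq, if_false, add_zero]
      exact (Nat.sub_le _ _).trans this
  · have hfree := singletonFree_of_forall_not_fit hP.admissible ht hnew
    refine ⟨?_, ?_, ?_⟩
    · simpa [or_imp, forall_and] using hP.ne_nil
    · simpa [or_imp, forall_and, ht] using hP.admissible
    · rw [List.countP_append, List.countP_eq_zero.mpr (by simpa [SingletonFree] using hfree)]
      simp

lemma singletonFree_set {bins : List (List ℕ)} (hP : IsBFPacking I bins) {i : ℕ}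
    (hi : i < bins.length) {x : ℕ} (hx : bins[i] = [x]) {b : List ℕ} (hb : b.length ≠ 1) :
    SingletonFree (bins.set i b) := by
  have hcount := hP.countP_singleton_le_one
  have hset := List.countP_set (p := fun b => b.length == 1) hi (a := b)
  simp only [hx, List.length_singleton, beq_self_eq_true, if_true, beq_iff_eq, hb, if_false,
    add_zero] at hset
  have : (bins.set i b).countP (fun b => b.length == 1) = 0 := by omega
  simpa [SingletonFree] using this

lemma bfFrom {bins ts final : _} (hP : IsBFPacking I bins) (h : BFFrom I bins ts final)
    (hts : ∀ t ∈ ts, Admissible I t) : IsBFPacking I final := by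
  induction h with
  | nil => exact hP
  | cons hstep _ ih =>
    exact ih (hP.step (hts _ List.mem_cons_self) hstep) fun t ht =>
      hts t (List.mem_cons_of_mem _ ht)

end IsBFPacking

namespace HasSettled

lemma step {q t : ℕ} {bins bins' : List (List ℕ)} (h : HasSettled I q bins)
    (hP : IsBFPacking I bins) (ht : Admissible I t) (hs : BFStep I bins t bins') :
    HasSettled I q bins' := by
  obtain ⟨b, hb, hqb, hset⟩ := h
  rcases hs with ⟨i, hi, hfit, -, rfl⟩ | ⟨-, rfl⟩
  · by_cases hbi : b = bins[i]
    · subst hbi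
      exact ⟨_, List.mem_set hi _, List.mem_cons_of_mem _ hqb,
        hset.cons (hP.admissible _ hb) ht hfit⟩
    · exact ⟨b, List.mem_set_of_mem_of_ne hi hb hbi _, hqb, hset⟩
  · exact ⟨b, List.mem_append_left _ hb, hqb, hset⟩

lemma bfFrom {q : ℕ} {bins ts final : _} (h : HasSettled I q bins) (hP : IsBFPacking I bins)
    (hbf : BFFrom I bins ts final) (hts : ∀ t ∈ ts, Admissible I t) :
    HasSettled I q final := by
  induction hbf with
  | nil => exact h
  | cons hstep _ ih =>
    have ht := hts _ List.mem_cons_self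
    exact ih (h.step hP ht hstep) (hP.step ht hstep) fun t ht =>
      hts t (List.mem_cons_of_mem _ ht)

end HasSettled

lemma BFFrom.exists_of_append {bins final : List (List ℕ)} {ts₁ ts₂ : List ℕ}
    (h : BFFrom I bins (ts₁ ++ ts₂) final) :
    ∃ mid, BFFrom I bins ts₁ mid ∧ BFFrom I mid ts₂ final := by
  induction ts₁ generalizing bins with
  | nil => exact ⟨bins, .nil _, h⟩
  | cons t ts ih =>
    obtain _ | ⟨hstep, hrest⟩ := h
    obtain ⟨mid, h₁, h₂⟩ := ih hrest
    exact ⟨mid, .cons hstep h₁, h₂⟩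

namespace BFStep

variable {bins bins' : List (List ℕ)} {t : ℕ}

lemma cases_placement (h : BFStep I bins t bins') (hP : IsBFPacking I bins)
    (ht : Admissible I t) :
    (∃ b ∈ bins, b.length = 2 ∧ t :: b ∈ bins') ∨
    (∃ x, [x] ∈ bins ∧ [t, x] ∈ bins' ∧ SingletonFree bins') ∨
    (SingletonFree bins ∧ bins' = bins ++ [[t]]) := by
  rcases h with ⟨i, hi, hfit, -, rfl⟩ | ⟨hnew, rfl⟩
  · have hmem := List.getElem_mem hi
    have hle := length_le_two_of_fits (hP.admissible _ hmem) ht hfit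
    have hpos := List.length_pos_iff.mpr (hP.ne_nil _ hmem)
    obtain hlen | hlen : bins[i].length = 1 ∨ bins[i].length = 2 := by omega
    · obtain ⟨x, hx⟩ := List.length_eq_one_iff.mp hlen
      refine Or.inr (Or.inl ⟨x, hx ▸ hmem, hx ▸ List.mem_set hi _, ?_⟩)
      exact hP.singletonFree_set hi hx (by simp [hx])
    · exact Or.inl ⟨_, hmem, hlen, List.mem_set hi _⟩
  · exact Or.inr (Or.inr ⟨singletonFree_of_forall_not_fit hP.admissible ht hnew, rfl⟩)

lemma hasSettled_of_two_bin {b : List ℕ} (hlen : b.length = 2) (hb : t :: b ∈ bins') :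
    HasSettled I t bins' :=
  ⟨_, hb, List.mem_cons_self, Or.inl (by simp [hlen])⟩

lemma hasSettled_or_eq_append (h : BFStep I bins t bins') (hP : IsBFPacking I bins)
    (ht : Admissible I t) (hfree : SingletonFree bins) :
    HasSettled I t bins' ∨ bins' = bins ++ [[t]] := by
  rcases cases_placement h hP ht with ⟨b, -, hlen, hb⟩ | ⟨x, hx, -⟩ | ⟨-, rfl⟩
  · exact Or.inl (hasSettled_of_two_bin hlen hb)
  · exact absurd rfl (hfree _ hx)
  · exact Or.inr rfl

lemma hasSettled_of_append_small {B : List (List ℕ)} {s : ℕ}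
    (h : BFStep I (B ++ [[s]]) t bins') (hP : IsBFPacking I (B ++ [[s]]))
    (hfree : SingletonFree B) (hs : IsSmall I s) (ht : Admissible I t) (hts : IsSmall I t) :
    HasSettled I t bins' := by
  rcases cases_placement h hP ht with ⟨b, -, hlen, hb⟩ | ⟨x, hx, hb, -⟩ | ⟨hfree', -⟩
  · exact hasSettled_of_two_bin hlen hb
  · obtain rfl : x = s := by
      rcases List.mem_append.mp hx with hxB | hxs
      · exact absurd rfl (hfree _ hxB)
      · simpa using hxs
    exact ⟨_, hb, by simp, Or.inr ⟨rfl, by simp [hts, hs]⟩⟩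
  · exact (hfree' [s] (by simp) rfl).elim

end BFStep

lemma hasSettled_of_three_small_steps {B₀ B₁ B₂ B₃ : List (List ℕ)} {a b c : ℕ}
    (hP : IsBFPacking I B₀) (ha : Admissible I a) (hb : Admissible I b) (hc : Admissible I c)
    (has : IsSmall I a) (hbs : IsSmall I b) (hcs : IsSmall I c)
    (h₁ : BFStep I B₀ a B₁) (h₂ : BFStep I B₁ b B₂) (h₃ : BFStep I B₂ c B₃) :
    HasSettled I a B₃ ∨ HasSettled I b B₃ ∨ HasSettled I c B₃ := by
  have hP₁ := hP.step ha h₁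
  have hP₂ := hP₁.step hb h₂
  rcases BFStep.cases_placement h₁ hP ha with
    ⟨_, -, hlen, hmem⟩ | ⟨-, -, -, hfree⟩ | ⟨hfree, rfl⟩
  · exact Or.inl (((BFStep.hasSettled_of_two_bin hlen hmem).step hP₁ hb h₂).step hP₂ hc h₃)
  · rcases BFStep.hasSettled_or_eq_append h₂ hP₁ hb hfree with hS | rfl
    · exact Or.inr (Or.inl (hS.step hP₂ hc h₃))
    · exact Or.inr (Or.inr (BFStep.hasSettled_of_append_small h₃ hP₂ hfree hbs hc hcs))
  · exact Or.inr (Or.inl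
      ((BFStep.hasSettled_of_append_small h₂ hP₁ hfree has hb hbs).step hP₂ hc h₃))

lemma range_eq_append_three {n p : ℕ} (hp : p + 2 < n) :
    ∃ rest, List.range n = List.range p ++ p :: (p + 1) :: (p + 2) :: rest := by
  refine ⟨(List.range (n - (p + 3))).map (p + 3 + ·), ?_⟩
  conv_lhs => rw [← Nat.add_sub_cancel' (show p + 3 ≤ n by omega)]
  simp [List.range_add, List.range_succ]

end BestFit

open BestFit

/-- If all items are in (1/4,1/2] and three small items (sizes in (1/4,1/3]) arrive
consecutively, then in the final Best-Fit packing at least one of them lies in a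
3-item bin or in a bin containing exactly two small items. -/
theorem bf_triplet (I : List ℝ)
    (hI : ∀ x ∈ I, 1 / 4 < x ∧ x ≤ 1 / 2)
    (p : ℕ) (hp : p + 2 < I.length)
    (hsmall : ∀ q ∈ [p, p + 1, p + 2], I.getD q 0 ≤ 1 / 3)
    (bins : List (List ℕ)) (hbf : BFFrom I [] (List.range I.length) bins) :
    ∃ b ∈ bins, (p ∈ b ∨ p + 1 ∈ b ∨ p + 2 ∈ b) ∧
      (b.length = 3 ∨ (b.length = 2 ∧ ∀ i ∈ b, I.getD i 0 ≤ 1 / 3)) := by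
  have hadm : ∀ t ∈ List.range I.length, Admissible I t := fun t ht => by
    rw [Admissible, List.getD_eq_getElem?_getD, List.getElem?_eq_getElem (List.mem_range.mp ht)]
    exact hI _ (List.getElem_mem _)
  obtain ⟨rest, hsplit⟩ := range_eq_append_three hp
  rw [hsplit] at hbf hadm
  obtain ⟨B₀, hbf₀, _ | ⟨h₁, _ | ⟨h₂, _ | ⟨h₃, hrest⟩⟩⟩⟩ :=
    BFFrom.exists_of_append hbf
  have hP₀ := IsBFPacking.nil.bfFrom hbf₀ fun t ht => hadm t (by simp [ht])
  have ha := hadm p (by simp)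
  have hb := hadm (p + 1) (by simp)
  have hc := hadm (p + 2) (by simp)
  have hP₃ := ((hP₀.step ha h₁).step hb h₂).step hc h₃
  rcases hasSettled_of_three_small_steps hP₀ ha hb hc (hsmall p (by simp))
      (hsmall (p + 1) (by simp)) (hsmall (p + 2) (by simp)) h₁ h₂ h₃ with hS | hS | hS <;>
  · obtain ⟨B, hB, hq, hS⟩ := hS.bfFrom hP₃ hrest fun t ht => hadm t (by simp [ht])
    exact ⟨B, hB, by simp [hq], hS⟩
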